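/- arXiv:2202.06006 — 4 statements merged into one kernel-verified Lean document; each statement's English description precedes it below -/
import Mathlib

section
/- There exist ε₀ > 0 and C > 0 (depending only on N, k, d, r, ξ₀) such that for every ε ∈ (0,ε₀), every admissible (μ,σ), every l ∈ {1,…,k} and every j ∈ {1,…,k} with j ≠ l, one has ∫_{A_l} U_j(x)^{p+1} dx ≤ C ε^{Nθ/(2k)}. -/
/-!
Write `q = ε ^ (θ / (2k))`; by admissibility every scale `μ_{iε} = μ_i q ^ (2i-1)` lies within
a factor `d` of `q ^ (2i-1)`, and
`U_j ^ (p+1) = α_N ^ (p+1) (μ_{jε} / (μ_{jε}² + |x - ξ_{jε}|²)) ^ N`.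

If `j < l`, then `A_l` lies in a ball of radius `≲ q ^ (2l-2) ≤ q μ_{jε} / d²` on which
`U_j ^ (p+1) ≤ α_N ^ (p+1) μ_{jε} ^ (-N)`, so the integral is `O(q ^ N)`.

If `j > l`, then `ξ_{jε}` is at distance `≤ s = d q ^ (2l) / 2` from `ξ₀`, while `A_l` stays at
distance `≥ 2 s` from `ξ₀`. Away from the `s`-ball around its centre the profile is dominated by
`(4 μ / s²) ^ N (1 + |y| / s) ^ (-2N)`, whose integral scales like `(4 μ / s) ^ N`, and
`μ_{jε} / s ≤ 2 q / d²`.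
-/

open MeasureTheory Metric

/-- `α_N = (N(N-4)(N-2)(N+2))^((N-4)/8)`. -/
noncomputable def alphaN (N : ℕ) : ℝ :=
  ((N : ℝ) * ((N : ℝ) - 4) * ((N : ℝ) - 2) * ((N : ℝ) + 2)) ^ (((N : ℝ) - 4) / 8)

/-- The critical exponent `p = (N+4)/(N-4)`. -/
noncomputable def pexp (N : ℕ) : ℝ := ((N : ℝ) + 4) / ((N : ℝ) - 4)

/-- The standard bubble `U_{μ,ξ}(x) = α_N (μ/(μ² + |x-ξ|²))^((N-4)/2)`. -/
noncomputable def bubble (N : ℕ) (μ : ℝ) (ξ : EuclideanSpace ℝ (Fin N))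
    (x : EuclideanSpace ℝ (Fin N)) : ℝ :=
  alphaN N * (μ / (μ ^ 2 + ‖x - ξ‖ ^ 2)) ^ (((N : ℝ) - 4) / 2)

/-- `θ = 2k(N-2)/(2k(N-2)-2)`. -/
noncomputable def theta (N k : ℕ) : ℝ :=
  (2 * (k : ℝ) * ((N : ℝ) - 2)) / (2 * (k : ℝ) * ((N : ℝ) - 2) - 2)

/-- `μ_{jε} = μ_j ε^((2j-1)θ/(2k))` (indices `j = 1, …, k`). -/
noncomputable def muScaled (N k : ℕ) (μ : ℕ → ℝ) (ε : ℝ) (j : ℕ) : ℝ :=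
  μ j * ε ^ ((2 * (j : ℝ) - 1) * theta N k / (2 * (k : ℝ)))

/-- `ξ_{jε} = ξ₀ + μ_{jε} σ_j`. -/
noncomputable def xiScaled (N k : ℕ) (ξ₀ : EuclideanSpace ℝ (Fin N)) (μ : ℕ → ℝ)
    (σ : ℕ → EuclideanSpace ℝ (Fin N)) (ε : ℝ) (j : ℕ) : EuclideanSpace ℝ (Fin N) :=
  ξ₀ + muScaled N k μ ε j • σ j

/-- `U_j = U_{μ_{jε}, ξ_{jε}}`. -/
noncomputable def Ubub (N k : ℕ) (ξ₀ : EuclideanSpace ℝ (Fin N)) (μ : ℕ → ℝ)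
    (σ : ℕ → EuclideanSpace ℝ (Fin N)) (ε : ℝ) (j : ℕ)
    (x : EuclideanSpace ℝ (Fin N)) : ℝ :=
  bubble N (muScaled N k μ ε j) (xiScaled N k ξ₀ μ σ ε j) x

/-- The annulus `A_l = B(ξ₀, √(μ_{lε}μ_{(l-1)ε})) ∖ B(ξ₀, √(μ_{lε}μ_{(l+1)ε}))`,
with the conventions `μ_{0ε}μ_{1ε} = r²` and `μ_{kε}μ_{(k+1)ε} = ε²`. -/
noncomputable def annulus (N k : ℕ) (ξ₀ : EuclideanSpace ℝ (Fin N)) (μ : ℕ → ℝ)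
    (r ε : ℝ) (l : ℕ) : Set (EuclideanSpace ℝ (Fin N)) :=
  ball ξ₀ (if l = 1 then r else Real.sqrt (muScaled N k μ ε l * muScaled N k μ ε (l - 1))) \
  ball ξ₀ (if l = k then ε else Real.sqrt (muScaled N k μ ε l * muScaled N k μ ε (l + 1)))

/-- `(μ,σ)` is admissible: `d < μ_j < 1/d` and `|σ_j| < 1/d` for `j = 1, …, k`. -/
def admissible (N k : ℕ) (d : ℝ) (μ : ℕ → ℝ) (σ : ℕ → EuclideanSpace ℝ (Fin N)) : Prop :=
  ∀ j, 1 ≤ j → j ≤ k → d < μ j ∧ μ j < 1 / d ∧ ‖σ j‖ < 1 / d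

open Module

lemma div_sq_add_sq_le_inv {m : ℝ} (hm : 0 < m) (ρ : ℝ) : m / (m ^ 2 + ρ ^ 2) ≤ m⁻¹ := by
  rw [div_le_iff₀ (by positivity)]
  field_simp
  nlinarith [sq_nonneg ρ]

lemma div_sq_add_sq_pow_le {m s ρ : ℝ} (hm : 0 ≤ m) (hs : 0 < s) (hsρ : s ≤ ρ) (n : ℕ) :
    (m / (m ^ 2 + ρ ^ 2)) ^ n ≤ (4 * m / s ^ 2) ^ n * (1 + ρ / s) ^ (-(2 * n : ℝ)) := by
  have hρ : 0 < ρ := hs.trans_le hsρ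
  have hbase : m / (m ^ 2 + ρ ^ 2) ≤ 4 * m / s ^ 2 * ((1 + ρ / s) ^ 2)⁻¹ := by
    rw [show 4 * m / s ^ 2 * ((1 + ρ / s) ^ 2)⁻¹ = 4 * m / (s + ρ) ^ 2 by field_simp,
      div_le_div_iff₀ (by positivity) (by positivity)]
    nlinarith [mul_le_mul_of_nonneg_left (show (s + ρ) ^ 2 ≤ 4 * ρ ^ 2 by nlinarith) hm,
      mul_nonneg hm (sq_nonneg m)]
  have hrpow : (1 + ρ / s) ^ (-(2 * n : ℝ)) = ((1 + ρ / s) ^ 2)⁻¹ ^ n := by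
    rw [Real.rpow_neg (by positivity), show (2 * n : ℝ) = ((2 * n : ℕ) : ℝ) by push_cast; ring,
      Real.rpow_natCast, pow_mul, inv_pow]
  rw [hrpow, ← mul_pow]
  exact pow_le_pow_left₀ (by positivity) hbase n

section Profile

variable {E : Type*} [NormedAddCommGroup E] [NormedSpace ℝ E] [FiniteDimensional ℝ E]
  [MeasurableSpace E] [BorelSpace E] (μ : Measure E) [μ.IsAddHaarMeasure]

lemma setIntegral_div_sq_add_sq_pow_le_of_subset_ball {A : Set E} {c ξ : E} {R m : ℝ}
    (hA : A ⊆ ball c R) (hR : 0 < R) (hm : 0 < m) :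
    ∫ x in A, (m / (m ^ 2 + ‖x - ξ‖ ^ 2)) ^ finrank ℝ E ∂μ
      ≤ (R / m) ^ finrank ℝ E * μ.real (ball 0 1) := by
  have hball : μ.real (ball c R) = R ^ finrank ℝ E * μ.real (ball 0 1) := by
    rw [measureReal_def, measureReal_def, Measure.addHaar_ball_of_pos μ c hR, ENNReal.toReal_mul,
      ENNReal.toReal_ofReal (by positivity)]
  have hbound : ∀ x ∈ A, ‖(m / (m ^ 2 + ‖x - ξ‖ ^ 2)) ^ finrank ℝ E‖ ≤ m⁻¹ ^ finrank ℝ E :=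
    fun x _ ↦ by
      rw [Real.norm_of_nonneg (by positivity)]
      exact pow_le_pow_left₀ (by positivity) (div_sq_add_sq_le_inv hm _) _
  calc ∫ x in A, (m / (m ^ 2 + ‖x - ξ‖ ^ 2)) ^ finrank ℝ E ∂μ
      ≤ m⁻¹ ^ finrank ℝ E * μ.real A := (le_abs_self _).trans
        (norm_setIntegral_le_of_norm_le_const ((measure_mono hA).trans_lt measure_ball_lt_top)
          hbound)
    _ ≤ m⁻¹ ^ finrank ℝ E * μ.real (ball c R) := by gcongr; exact measure_ball_lt_top.ne
    _ = (R / m) ^ finrank ℝ E * μ.real (ball 0 1) := by rw [hball, div_pow]; ring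

lemma integrable_one_add_norm_inv_smul_sub {r : ℝ} (hr : (finrank ℝ E : ℝ) < r) (ξ : E)
    {s : ℝ} (hs : s ≠ 0) : Integrable (fun x ↦ (1 + ‖s⁻¹ • (x - ξ)‖) ^ (-r)) μ :=
  ((integrable_one_add_norm hr).comp_smul (inv_ne_zero hs)).comp_sub_right ξ

lemma integral_one_add_norm_inv_smul_sub (r : ℝ) (ξ : E) {s : ℝ} (hs : 0 ≤ s) :
    ∫ x, (1 + ‖s⁻¹ • (x - ξ)‖) ^ (-r) ∂μ = s ^ finrank ℝ E * ∫ y, (1 + ‖y‖) ^ (-r) ∂μ := by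
  rw [integral_sub_right_eq_self (fun x ↦ (1 + ‖s⁻¹ • x‖) ^ (-r)) ξ,
    Measure.integral_comp_inv_smul_of_nonneg μ (fun y ↦ (1 + ‖y‖) ^ (-r)) hs, smul_eq_mul]

lemma setIntegral_div_sq_add_sq_pow_le_of_le_norm {A : Set E} (hA : MeasurableSet A)
    {ξ : E} {m s : ℝ} (hm : 0 ≤ m) (hs : 0 < s) (hAs : ∀ x ∈ A, s ≤ ‖x - ξ‖)
    (hE : 0 < finrank ℝ E) :
    ∫ x in A, (m / (m ^ 2 + ‖x - ξ‖ ^ 2)) ^ finrank ℝ E ∂μ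
      ≤ (4 * m / s) ^ finrank ℝ E * ∫ y, (1 + ‖y‖) ^ (-(2 * finrank ℝ E : ℝ)) ∂μ := by
  set n := finrank ℝ E
  set g : E → ℝ := fun x ↦ (4 * m / s ^ 2) ^ n * (1 + ‖s⁻¹ • (x - ξ)‖) ^ (-(2 * n : ℝ))
  have hg : Integrable g μ :=
    (integrable_one_add_norm_inv_smul_sub μ (by norm_cast; omega) ξ hs.ne').const_mul _
  have hfg : ∀ x ∈ A, (m / (m ^ 2 + ‖x - ξ‖ ^ 2)) ^ n ≤ g x := fun x hx ↦ by
    have hnorm : ‖s⁻¹ • (x - ξ)‖ = ‖x - ξ‖ / s := by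
      rw [norm_smul, Real.norm_of_nonneg (by positivity), inv_mul_eq_div]
    simpa only [g, hnorm] using div_sq_add_sq_pow_le hm hs (hAs x hx) n
  calc ∫ x in A, (m / (m ^ 2 + ‖x - ξ‖ ^ 2)) ^ n ∂μ ≤ ∫ x in A, g x ∂μ :=
        integral_mono_of_nonneg (ae_of_all _ fun x ↦ by positivity) hg.integrableOn
          (ae_restrict_of_forall_mem hA hfg)
    _ ≤ ∫ x, g x ∂μ := setIntegral_le_integral hg (ae_of_all _ fun x ↦ by positivity)
    _ = (4 * m / s) ^ n * ∫ y, (1 + ‖y‖) ^ (-(2 * n : ℝ)) ∂μ := by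
      rw [integral_const_mul, integral_one_add_norm_inv_smul_sub μ _ ξ hs.le, ← mul_assoc,
        ← mul_pow]
      congr 2
      field_simp

end Profile

lemma alphaN_pos {N : ℕ} (hN : 5 ≤ N) : 0 < alphaN N := by
  have hN' : (5 : ℝ) ≤ N := by exact_mod_cast hN
  have h1 : (0 : ℝ) < N * (N - 4) := by nlinarith
  have h2 : (0 : ℝ) < (N - 2) * (N + 2) := by nlinarith
  exact Real.rpow_pos_of_pos (by nlinarith) _

lemma bubble_rpow_pexp_add_one {N : ℕ} (hN : 5 ≤ N) {m : ℝ} (hm : 0 ≤ m)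
    (ξ x : EuclideanSpace ℝ (Fin N)) :
    bubble N m ξ x ^ (pexp N + 1)
      = alphaN N ^ (pexp N + 1) * (m / (m ^ 2 + ‖x - ξ‖ ^ 2)) ^ N := by
  have hN' : (5 : ℝ) ≤ N := by exact_mod_cast hN
  have hexp : ((N : ℝ) - 4) / 2 * (pexp N + 1) = N := by
    rw [pexp]
    field_simp [show (N : ℝ) - 4 ≠ 0 by linarith]
    ring
  have hbase : 0 ≤ m / (m ^ 2 + ‖x - ξ‖ ^ 2) := by positivity
  rw [bubble, Real.mul_rpow (alphaN_pos hN).le (Real.rpow_nonneg hbase _), ← Real.rpow_mul hbase,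
    hexp, Real.rpow_natCast]

lemma theta_pos {N k : ℕ} (hN : 4 ≤ N) (hk : 1 ≤ k) : 0 < theta N k := by
  have hN' : (4 : ℝ) ≤ N := by exact_mod_cast hN
  have hk' : (1 : ℝ) ≤ k := by exact_mod_cast hk
  exact div_pos (by nlinarith) (by nlinarith)

def ScalesComparable (d q : ℝ) (k : ℕ) (m : ℕ → ℝ) : Prop :=
  ∀ i, 1 ≤ i → i ≤ k → d * q ^ (2 * i - 1) ≤ m i ∧ m i ≤ d⁻¹ * q ^ (2 * i - 1)

namespace ScalesComparable

variable {d q : ℝ} {k : ℕ} {m : ℕ → ℝ}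

lemma pos (hm : ScalesComparable d q k m) (hd : 0 < d) (hq : 0 < q) {i : ℕ} (hi : 1 ≤ i)
    (hik : i ≤ k) : 0 < m i :=
  (mul_pos hd (pow_pos hq _)).trans_le (hm i hi hik).1

lemma sqrt_mul_sub_one_le (hm : ScalesComparable d q k m) (hd : 0 < d) (hq : 0 < q)
    (hq1 : q ≤ 1) {j l : ℕ} (hj : 1 ≤ j) (hjl : j < l) (hlk : l ≤ k) :
    √(m l * m (l - 1)) ≤ q / d ^ 2 * m j := by
  have hprod : m l * m (l - 1) ≤ (d⁻¹ * q ^ (2 * l - 2)) ^ 2 := by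
    calc m l * m (l - 1) ≤ d⁻¹ * q ^ (2 * l - 1) * (d⁻¹ * q ^ (2 * (l - 1) - 1)) :=
          mul_le_mul (hm l (by omega) hlk).2 (hm (l - 1) (by omega) (by omega)).2
            (hm.pos hd hq (by omega) (by omega)).le (by positivity)
      _ = (d⁻¹ * q ^ (2 * l - 2)) ^ 2 := by
        rw [mul_pow, ← pow_mul, show (2 * l - 2) * 2 = (2 * l - 1) + (2 * (l - 1) - 1) by omega,
          pow_add]
        ring
  have hpow : q ^ (2 * l - 2) ≤ q * q ^ (2 * j - 1) := by
    rw [← pow_succ', show 2 * j - 1 + 1 = 2 * j by omega]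
    exact pow_le_pow_of_le_one hq.le hq1 (by omega)
  calc √(m l * m (l - 1)) ≤ d⁻¹ * q ^ (2 * l - 2) :=
        Real.sqrt_le_iff.2 ⟨by positivity, hprod⟩
    _ ≤ d⁻¹ * (q * q ^ (2 * j - 1)) := by gcongr
    _ = q / d ^ 2 * (d * q ^ (2 * j - 1)) := by field_simp
    _ ≤ q / d ^ 2 * m j := by gcongr; exact (hm j hj (by omega)).1

lemma mul_pow_le_sqrt_mul_add_one (hm : ScalesComparable d q k m) (hd : 0 < d) (hq : 0 < q)
    {l : ℕ} (hl : 1 ≤ l) (hlk : l < k) : d * q ^ (2 * l) ≤ √(m l * m (l + 1)) := by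
  refine Real.le_sqrt_of_sq_le ?_
  calc (d * q ^ (2 * l)) ^ 2 = d * q ^ (2 * l - 1) * (d * q ^ (2 * (l + 1) - 1)) := by
        rw [mul_pow, ← pow_mul, show 2 * l * 2 = (2 * l - 1) + (2 * (l + 1) - 1) by omega, pow_add]
        ring
    _ ≤ m l * m (l + 1) :=
        mul_le_mul (hm l hl hlk.le).1 (hm (l + 1) (by omega) hlk).1 (by positivity)
          (hm.pos hd hq hl hlk.le).le

lemma le_div_mul_pow (hm : ScalesComparable d q k m) (hd : 0 ≤ d) (hq : 0 ≤ q) (hq1 : q ≤ 1)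
    {j l : ℕ} (hlj : l < j) (hjk : j ≤ k) : m j ≤ q / d * q ^ (2 * l) := by
  calc m j ≤ d⁻¹ * q ^ (2 * j - 1) := (hm j (by omega) hjk).2
    _ ≤ d⁻¹ * q ^ (2 * l + 1) :=
        mul_le_mul_of_nonneg_left (pow_le_pow_of_le_one hq hq1 (by omega)) (inv_nonneg.2 hd)
    _ = q / d * q ^ (2 * l) := by rw [pow_succ']; ring

end ScalesComparable

section Configuration

variable {N k : ℕ} {ξ₀ : EuclideanSpace ℝ (Fin N)} {μ : ℕ → ℝ}
  {σ : ℕ → EuclideanSpace ℝ (Fin N)} {d q r ε : ℝ}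

lemma muScaled_eq_mul_pow (hε : 0 < ε) {i : ℕ} (hi : 1 ≤ i) :
    muScaled N k μ ε i = μ i * (ε ^ (theta N k / (2 * k))) ^ (2 * i - 1) := by
  rw [muScaled, ← Real.rpow_natCast, ← Real.rpow_mul hε.le, Nat.cast_sub (by omega)]
  push_cast
  ring_nf

lemma scalesComparable_muScaled (hadm : admissible N k d μ σ) (hε : 0 < ε) :
    ScalesComparable d (ε ^ (theta N k / (2 * k))) k (muScaled N k μ ε) := by
  intro i hi hik
  obtain ⟨hlow, hup, -⟩ := hadm i hi hik
  have hpow : 0 ≤ (ε ^ (theta N k / (2 * k))) ^ (2 * i - 1) := by positivity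
  rw [muScaled_eq_mul_pow hε hi]
  exact ⟨by gcongr, by rw [← one_div]; gcongr⟩

lemma measurableSet_annulus (l : ℕ) : MeasurableSet (annulus N k ξ₀ μ r ε l) :=
  measurableSet_ball.diff measurableSet_ball

lemma annulus_subset_ball {l : ℕ} (hl : l ≠ 1) :
    annulus N k ξ₀ μ r ε l ⊆ ball ξ₀ √(muScaled N k μ ε l * muScaled N k μ ε (l - 1)) :=
  fun x hx ↦ by simpa [annulus, hl] using hx.1

lemma le_norm_sub_of_mem_annulus {l : ℕ} (hl : l ≠ k) {x : EuclideanSpace ℝ (Fin N)}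
    (hx : x ∈ annulus N k ξ₀ μ r ε l) :
    √(muScaled N k μ ε l * muScaled N k μ ε (l + 1)) ≤ ‖x - ξ₀‖ := by
  simpa [annulus, hl, dist_eq_norm] using hx.2

lemma setIntegral_annulus_le_of_lt (hd : 0 < d) (hq : 0 < q) (hq1 : q ≤ 1)
    (hm : ScalesComparable d q k (muScaled N k μ ε)) {j l : ℕ} (hj : 1 ≤ j) (hjl : j < l)
    (hlk : l ≤ k) (ξ : EuclideanSpace ℝ (Fin N)) :
    ∫ x in annulus N k ξ₀ μ r ε l,
        (muScaled N k μ ε j / (muScaled N k μ ε j ^ 2 + ‖x - ξ‖ ^ 2)) ^ N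
      ≤ (q / d ^ 2) ^ N * volume.real (ball (0 : EuclideanSpace ℝ (Fin N)) 1) := by
  have hmj := hm.pos hd hq hj (by omega)
  have hR : 0 < √(muScaled N k μ ε l * muScaled N k μ ε (l - 1)) :=
    Real.sqrt_pos.2 (mul_pos (hm.pos hd hq (by omega) hlk) (hm.pos hd hq (by omega) (by omega)))
  have := setIntegral_div_sq_add_sq_pow_le_of_subset_ball volume
    (annulus_subset_ball (ξ₀ := ξ₀) (r := r) (by omega)) hR hmj (ξ := ξ)
  rw [finrank_euclideanSpace_fin] at this
  refine this.trans (mul_le_mul_of_nonneg_right (pow_le_pow_left₀ (by positivity) ?_ N)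
    measureReal_nonneg)
  rw [div_le_iff₀ hmj]
  exact hm.sqrt_mul_sub_one_le hd hq hq1 hj hjl hlk

lemma setIntegral_annulus_le_of_gt (hN : 1 ≤ N) (hd : 0 < d) (hq : 0 < q) (hqd : q ≤ d ^ 3 / 2)
    (hq1 : q ≤ 1) (hm : ScalesComparable d q k (muScaled N k μ ε)) {j l : ℕ}
    (hσ : ‖σ j‖ ≤ d⁻¹) (hl : 1 ≤ l) (hlj : l < j) (hjk : j ≤ k) :
    ∫ x in annulus N k ξ₀ μ r ε l, (muScaled N k μ ε j /
        (muScaled N k μ ε j ^ 2 + ‖x - xiScaled N k ξ₀ μ σ ε j‖ ^ 2)) ^ N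
      ≤ (8 * q / d ^ 2) ^ N *
        ∫ y : EuclideanSpace ℝ (Fin N), (1 + ‖y‖) ^ (-(2 * N : ℝ)) := by
  set m := muScaled N k μ ε j
  set s := d * q ^ (2 * l) / 2 with hs_def
  have hm0 : 0 < m := hm.pos hd hq (by omega) hjk
  have hs : 0 < s := by positivity
  have hmj : m ≤ q / d * q ^ (2 * l) := hm.le_div_mul_pow hd.le hq.le hq1 hlj hjk
  have hcentre : ‖xiScaled N k ξ₀ μ σ ε j - ξ₀‖ ≤ s := by
    rw [xiScaled, add_sub_cancel_left, norm_smul, Real.norm_of_nonneg hm0.le]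
    calc m * ‖σ j‖ ≤ q / d * q ^ (2 * l) * d⁻¹ := by gcongr
      _ = q / d ^ 3 * (d * q ^ (2 * l)) := by field_simp
      _ ≤ 1 / 2 * (d * q ^ (2 * l)) :=
          mul_le_mul_of_nonneg_right (by rw [div_le_iff₀ (by positivity)]; linarith) (by positivity)
      _ = s := by ring
  have hfar : ∀ x ∈ annulus N k ξ₀ μ r ε l, s ≤ ‖x - xiScaled N k ξ₀ μ σ ε j‖ := by
    intro x hx
    have hinner := (hm.mul_pow_le_sqrt_mul_add_one hd hq hl (by omega)).trans
      (le_norm_sub_of_mem_annulus (by omega) hx)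
    have htri := norm_sub_norm_le (x - ξ₀) (xiScaled N k ξ₀ μ σ ε j - ξ₀)
    rw [sub_sub_sub_cancel_right] at htri
    linarith [hs_def]
  have := setIntegral_div_sq_add_sq_pow_le_of_le_norm volume (measurableSet_annulus l) hm0.le hs
    hfar (by rw [finrank_euclideanSpace_fin]; omega)
  rw [finrank_euclideanSpace_fin] at this
  refine this.trans (mul_le_mul_of_nonneg_right (pow_le_pow_left₀ (by positivity) ?_ N)
    (integral_nonneg fun y ↦ by positivity))
  rw [div_le_iff₀ hs]
  calc 4 * m ≤ 4 * (q / d * q ^ (2 * l)) := by gcongr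
    _ = 8 * q / d ^ 2 * s := by field_simp; ring

lemma setIntegral_annulus_le_of_ne (hN : 1 ≤ N) (hd : 0 < d) (hq : 0 < q) (hqd : q ≤ d ^ 3 / 2)
    (hq1 : q ≤ 1) (hm : ScalesComparable d q k (muScaled N k μ ε)) {j l : ℕ}
    (hσ : ‖σ j‖ ≤ d⁻¹) (hl : 1 ≤ l) (hlk : l ≤ k) (hj : 1 ≤ j) (hjk : j ≤ k) (hjl : j ≠ l) :
    ∫ x in annulus N k ξ₀ μ r ε l, (muScaled N k μ ε j /
        (muScaled N k μ ε j ^ 2 + ‖x - xiScaled N k ξ₀ μ σ ε j‖ ^ 2)) ^ N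
      ≤ (8 * q / d ^ 2) ^ N * (volume.real (ball (0 : EuclideanSpace ℝ (Fin N)) 1) +
        ∫ y : EuclideanSpace ℝ (Fin N), (1 + ‖y‖) ^ (-(2 * N : ℝ))) := by
  have hV := measureReal_nonneg (μ := volume) (s := ball (0 : EuclideanSpace ℝ (Fin N)) 1)
  have hI : 0 ≤ ∫ y : EuclideanSpace ℝ (Fin N), (1 + ‖y‖) ^ (-(2 * N : ℝ)) :=
    integral_nonneg fun y ↦ by positivity
  rcases hjl.lt_or_gt with hjl | hlj
  · refine (setIntegral_annulus_le_of_lt hd hq hq1 hm hj hjl hlk _).trans ?_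
    gcongr <;> linarith
  · refine (setIntegral_annulus_le_of_gt hN hd hq hqd hq1 hm hσ hl hlj hjk).trans ?_
    gcongr
    linarith

end Configuration

theorem statement2_general (N k : ℕ) (hN : 5 ≤ N)
    (ξ₀ : EuclideanSpace ℝ (Fin N)) (d r : ℝ) (hd0 : 0 < d) (hd1 : d < 1) :
    ∃ ε₀ > (0 : ℝ), ∃ C > (0 : ℝ), ∀ ε : ℝ, 0 < ε → ε < ε₀ →
      ∀ (μ : ℕ → ℝ) (σ : ℕ → EuclideanSpace ℝ (Fin N)), admissible N k d μ σ →
      ∀ l, 1 ≤ l → l ≤ k → ∀ j, 1 ≤ j → j ≤ k → j ≠ l →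
      ∫ x in annulus N k ξ₀ μ r ε l, Ubub N k ξ₀ μ σ ε j x ^ (pexp N + 1)
        ≤ C * ε ^ ((N : ℝ) * theta N k / (2 * (k : ℝ))) := by
  set t := theta N k / (2 * k)
  set V := volume.real (ball (0 : EuclideanSpace ℝ (Fin N)) 1)
  set I := ∫ y : EuclideanSpace ℝ (Fin N), (1 + ‖y‖) ^ (-(2 * N : ℝ))
  have hV : 0 < V := ENNReal.toReal_pos (measure_ball_pos volume _ one_pos).ne'
    measure_ball_lt_top.ne
  have hI : 0 ≤ I := integral_nonneg fun y ↦ by positivity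
  have hα := alphaN_pos hN
  refine ⟨(d ^ 3 / 2) ^ t⁻¹, by positivity, alphaN N ^ (pexp N + 1) * (8 / d ^ 2) ^ N * (V + I),
    mul_pos (mul_pos (Real.rpow_pos_of_pos hα _) (by positivity)) (by linarith), ?_⟩
  intro ε hε hεε₀ μ σ hadm l hl hlk j hj hjk hjl
  have ht : 0 < t := div_pos (theta_pos (by omega) (by omega)) (by norm_cast; omega)
  set q := ε ^ t
  have hq : 0 < q := by positivity
  have hqd : q ≤ d ^ 3 / 2 := ((Real.lt_rpow_inv_iff_of_pos hε.le (by positivity) ht).1 hεε₀).le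
  have hq1 : q ≤ 1 := hqd.trans (by nlinarith [pow_le_one₀ hd0.le hd1.le (n := 3)])
  have hm := scalesComparable_muScaled hadm hε
  have hσ : ‖σ j‖ ≤ d⁻¹ := by rw [← one_div]; exact (hadm j hj hjk).2.2.le
  calc ∫ x in annulus N k ξ₀ μ r ε l, Ubub N k ξ₀ μ σ ε j x ^ (pexp N + 1)
      = alphaN N ^ (pexp N + 1) * ∫ x in annulus N k ξ₀ μ r ε l, (muScaled N k μ ε j /
          (muScaled N k μ ε j ^ 2 + ‖x - xiScaled N k ξ₀ μ σ ε j‖ ^ 2)) ^ N := by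
        simp_rw [Ubub, bubble_rpow_pexp_add_one hN (hm.pos hd0 hq hj hjk).le]
        exact integral_const_mul _ _
    _ ≤ alphaN N ^ (pexp N + 1) * ((8 * q / d ^ 2) ^ N * (V + I)) := by
        gcongr
        exact setIntegral_annulus_le_of_ne (by omega) hd0 hq hqd hq1 hm hσ hl hlk hj hjk hjl
    _ = alphaN N ^ (pexp N + 1) * (8 / d ^ 2) ^ N * (V + I) *
          ε ^ ((N : ℝ) * theta N k / (2 * k)) := by
        rw [show (N : ℝ) * theta N k / (2 * k) = t * N by ring, Real.rpow_mul hε.le,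
          Real.rpow_natCast]
        ring

/-- Lemma 6.6, estimate (6.14): `∫_{A_l} U_j^{p+1} = O(ε^{Nθ/(2k)})` for `j ≠ l`. -/
theorem statement2 (N k : ℕ) (hN : 5 ≤ N) (hk : 1 ≤ k)
    (ξ₀ : EuclideanSpace ℝ (Fin N)) (d r : ℝ) (hd0 : 0 < d) (hd1 : d < 1) (hr : 0 < r) :
    ∃ ε₀ > (0 : ℝ), ∃ C > (0 : ℝ), ∀ ε : ℝ, 0 < ε → ε < ε₀ →
      ∀ (μ : ℕ → ℝ) (σ : ℕ → EuclideanSpace ℝ (Fin N)), admissible N k d μ σ →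
      ∀ l, 1 ≤ l → l ≤ k → ∀ j, 1 ≤ j → j ≤ k → j ≠ l →
      ∫ x in annulus N k ξ₀ μ r ε l, Ubub N k ξ₀ μ σ ε j x ^ (pexp N + 1)
        ≤ C * ε ^ ((N : ℝ) * theta N k / (2 * (k : ℝ))) :=
  statement2_general N k hN ξ₀ d r hd0 hd1
end

section
/- Let Ω ⊂ ℝ^N be a bounded open set, ξ₀ ∈ Ω and r > 0. There exists C > 0 such that for all μ, ν ∈ (0,1] and all ξ, η ∈ ℝ^N with |ξ - ξ₀| ≤ r/2 and |η - ξ₀| ≤ r/2, one has ∫_{Ω ∖ B(ξ₀,r)} U_{ν,η}(x)^{p+1} dx ≤ C ν^N and ∫_{Ω ∖ B(ξ₀,r)} U_{μ,ξ}(x)^p U_{ν,η}(x) dx ≤ C μ^{(N+4)/2} ν^{(N-4)/2}. -/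
open MeasureTheory Metric

/-! Away from the concentration points, `U_{μ,ξ} ≤ A μ^{(N-4)/2}` uniformly, and the exponents
are such that `(μ^{(N-4)/2})^{p+1} = μ^N` and `(μ^{(N-4)/2})^p = μ^{(N+4)/2}`. Bounding each
integrand by a constant times the right power of `μ, ν` and integrating over the bounded set
`Ω ∖ B(ξ₀, r)` gives both estimates. -/

lemma le_norm_sub_of_notMem_ball {E : Type*} [SeminormedAddCommGroup E] {x ζ ξ₀ : E} {r : ℝ}
    (hζ : ‖ζ - ξ₀‖ ≤ r / 2) (hx : x ∉ ball ξ₀ r) : r / 2 ≤ ‖x - ζ‖ := by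
  have hxr : r ≤ ‖x - ξ₀‖ := by simpa [dist_eq_norm] using hx
  have := norm_sub_norm_le (x - ξ₀) (ζ - ξ₀)
  rw [sub_sub_sub_cancel_right] at this
  linarith

lemma rpow_le_mul_rpow_mul_of_le {b A t e q : ℝ} (hb : 0 ≤ b) (hA : 0 ≤ A) (ht : 0 ≤ t)
    (hq : 0 ≤ q) (h : b ≤ A * t ^ e) : b ^ q ≤ A ^ q * t ^ (e * q) :=
  calc b ^ q ≤ (A * t ^ e) ^ q := Real.rpow_le_rpow hb h hq
    _ = A ^ q * t ^ (e * q) := by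
      rw [Real.mul_rpow hA (Real.rpow_nonneg ht _), Real.rpow_mul ht]

lemma setIntegral_le_mul_of_forall_le_mul {α : Type*} [MeasurableSpace α] {μ : Measure α}
    {s : Set α} {f : α → ℝ} {K B : ℝ} (hs : μ s < ⊤) (hf₀ : ∀ x ∈ s, 0 ≤ f x)
    (hf : ∀ x ∈ s, f x ≤ K * B) (hB : 0 ≤ B) :
    ∫ x in s, f x ∂μ ≤ (K * μ.real s + 1) * B := by
  have hnorm : ∀ x ∈ s, ‖f x‖ ≤ K * B := fun x hx ↦ by
    rw [Real.norm_of_nonneg (hf₀ x hx)]; exact hf x hx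
  calc ∫ x in s, f x ∂μ ≤ ‖∫ x in s, f x ∂μ‖ := le_abs_self _
    _ ≤ K * B * μ.real s := norm_setIntegral_le_of_norm_le_const hs hnorm
    _ ≤ (K * μ.real s + 1) * B := by nlinarith [measureReal_nonneg (μ := μ) (s := s)]

section Bubble

variable {N : ℕ}

lemma mul_pexp_add_one (hN : (N : ℝ) ≠ 4) : ((N : ℝ) - 4) / 2 * (pexp N + 1) = N := by
  have : (N : ℝ) - 4 ≠ 0 := sub_ne_zero.mpr hN
  rw [pexp]; field_simp; ring

lemma mul_pexp (hN : (N : ℝ) ≠ 4) : ((N : ℝ) - 4) / 2 * pexp N = ((N : ℝ) + 4) / 2 := by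
  have : (N : ℝ) - 4 ≠ 0 := sub_ne_zero.mpr hN
  rw [pexp]; field_simp

lemma pexp_nonneg (hN : 4 ≤ N) : 0 ≤ pexp N := by
  have : (4 : ℝ) ≤ N := by exact_mod_cast hN
  exact div_nonneg (by linarith) (by linarith)

lemma alphaN_nonneg (hN : 4 ≤ N) : 0 ≤ alphaN N := by
  have : (4 : ℝ) ≤ N := by exact_mod_cast hN
  apply Real.rpow_nonneg
  have : 0 ≤ (N : ℝ) * ((N : ℝ) - 4) := by nlinarith
  exact mul_nonneg (mul_nonneg this (by linarith)) (by linarith)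

lemma bubble_nonneg (hN : 4 ≤ N) {μ : ℝ} (hμ : 0 ≤ μ) (ξ x : EuclideanSpace ℝ (Fin N)) :
    0 ≤ bubble N μ ξ x :=
  mul_nonneg (alphaN_nonneg hN) (Real.rpow_nonneg (div_nonneg hμ (by positivity)) _)

lemma bubble_le_of_le_norm_sub (hN : 4 ≤ N) {μ d : ℝ} (hμ : 0 ≤ μ) (hd : 0 < d)
    {ξ x : EuclideanSpace ℝ (Fin N)} (h : d ≤ ‖x - ξ‖) :
    bubble N μ ξ x ≤ alphaN N / (d ^ 2) ^ (((N : ℝ) - 4) / 2) * μ ^ (((N : ℝ) - 4) / 2) := by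
  have he : 0 ≤ ((N : ℝ) - 4) / 2 := by
    have : (4 : ℝ) ≤ N := by exact_mod_cast hN
    linarith
  have hbase : μ / (μ ^ 2 + ‖x - ξ‖ ^ 2) ≤ μ / d ^ 2 :=
    div_le_div_of_nonneg_left hμ (by positivity) (by nlinarith [sq_nonneg μ])
  calc bubble N μ ξ x ≤ alphaN N * (μ / d ^ 2) ^ (((N : ℝ) - 4) / 2) :=
        mul_le_mul_of_nonneg_left
          (Real.rpow_le_rpow (div_nonneg hμ (by positivity)) hbase he) (alphaN_nonneg hN)
    _ = _ := by rw [Real.div_rpow hμ (by positivity)]; ring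

lemma bubble_rpow_le_of_notMem_ball (hN : 4 ≤ N) {μ r q : ℝ} (hμ : 0 ≤ μ) (hr : 0 < r)
    (hq : 0 ≤ q) {ξ₀ ξ x : EuclideanSpace ℝ (Fin N)} (hξ : ‖ξ - ξ₀‖ ≤ r / 2)
    (hx : x ∉ ball ξ₀ r) :
    bubble N μ ξ x ^ q ≤ (alphaN N / ((r / 2) ^ 2) ^ (((N : ℝ) - 4) / 2)) ^ q
      * μ ^ (((N : ℝ) - 4) / 2 * q) :=
  rpow_le_mul_rpow_mul_of_le (bubble_nonneg hN hμ ξ x)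
    (div_nonneg (alphaN_nonneg hN) (by positivity)) hμ hq
    (bubble_le_of_le_norm_sub hN hμ (by positivity) (le_norm_sub_of_notMem_ball hξ hx))

end Bubble

theorem statement7_general (N : ℕ) (hN : 5 ≤ N) (Ω : Set (EuclideanSpace ℝ (Fin N)))
    (hΩb : Bornology.IsBounded Ω)
    (ξ₀ : EuclideanSpace ℝ (Fin N)) (r : ℝ) (hr : 0 < r) :
    ∃ C > (0 : ℝ), ∀ μ ν : ℝ, 0 < μ → μ ≤ 1 → 0 < ν → ν ≤ 1 →
      ∀ ξ η : EuclideanSpace ℝ (Fin N), ‖ξ - ξ₀‖ ≤ r / 2 → ‖η - ξ₀‖ ≤ r / 2 →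
      (∫ x in Ω \ ball ξ₀ r, bubble N ν η x ^ (pexp N + 1) ≤ C * ν ^ (N : ℝ)) ∧
      (∫ x in Ω \ ball ξ₀ r, bubble N μ ξ x ^ pexp N * bubble N ν η x
        ≤ C * μ ^ (((N : ℝ) + 4) / 2) * ν ^ (((N : ℝ) - 4) / 2)) := by
  have hN4 : 4 ≤ N := by omega
  have hNne : (N : ℝ) ≠ 4 := by exact_mod_cast (show N ≠ 4 by omega)
  have hp := pexp_nonneg hN4
  set A := alphaN N / ((r / 2) ^ 2) ^ (((N : ℝ) - 4) / 2)
  have hA : 0 ≤ A := div_nonneg (alphaN_nonneg hN4) (by positivity)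
  have hfin : volume (Ω \ ball ξ₀ r) < ⊤ :=
    (measure_mono Set.sdiff_subset).trans_lt hΩb.measure_lt_top
  have hA1 : A ^ (pexp N + 1) = A ^ pexp N * A := Real.rpow_add_one' hA (by linarith)
  refine ⟨A ^ (pexp N + 1) * volume.real (Ω \ ball ξ₀ r) + 1, by positivity, ?_⟩
  intro μ ν hμ _ hν _ ξ η hξ hη
  constructor
  · refine setIntegral_le_mul_of_forall_le_mul hfin
      (fun x _ ↦ Real.rpow_nonneg (bubble_nonneg hN4 hν.le η x) _) (fun x hx ↦ ?_) (by positivity)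
    simpa only [mul_pexp_add_one hNne] using
      bubble_rpow_le_of_notMem_ball hN4 hν.le hr (by linarith : 0 ≤ pexp N + 1) hη hx.2
  · rw [mul_assoc]
    refine setIntegral_le_mul_of_forall_le_mul hfin (fun x _ ↦ mul_nonneg
      (Real.rpow_nonneg (bubble_nonneg hN4 hμ.le ξ x) _) (bubble_nonneg hN4 hν.le η x))
      (fun x hx ↦ ?_) (by positivity)
    have hUp := bubble_rpow_le_of_notMem_ball hN4 hμ.le hr hp hξ hx.2
    rw [mul_pexp hNne] at hUp
    have hUν : bubble N ν η x ≤ A * ν ^ (((N : ℝ) - 4) / 2) :=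
      bubble_le_of_le_norm_sub hN4 hν.le (by positivity) (le_norm_sub_of_notMem_ball hη hx.2)
    calc bubble N μ ξ x ^ pexp N * bubble N ν η x
        ≤ (A ^ pexp N * μ ^ (((N : ℝ) + 4) / 2)) * (A * ν ^ (((N : ℝ) - 4) / 2)) :=
          mul_le_mul hUp hUν (bubble_nonneg hN4 hν.le η x) (by positivity)
      _ = _ := by rw [hA1]; ring

/-- Exterior estimates: away from the concentration region,
`∫_{Ω∖B(ξ₀,r)} U_{ν,η}^{p+1} ≤ C ν^N` and
`∫_{Ω∖B(ξ₀,r)} U_{μ,ξ}^p U_{ν,η} ≤ C μ^{(N+4)/2} ν^{(N-4)/2}`. -/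
theorem statement7 (N : ℕ) (hN : 5 ≤ N) (Ω : Set (EuclideanSpace ℝ (Fin N)))
    (hΩo : IsOpen Ω) (hΩb : Bornology.IsBounded Ω)
    (ξ₀ : EuclideanSpace ℝ (Fin N)) (hξ₀ : ξ₀ ∈ Ω) (r : ℝ) (hr : 0 < r) :
    ∃ C > (0 : ℝ), ∀ μ ν : ℝ, 0 < μ → μ ≤ 1 → 0 < ν → ν ≤ 1 →
      ∀ ξ η : EuclideanSpace ℝ (Fin N), ‖ξ - ξ₀‖ ≤ r / 2 → ‖η - ξ₀‖ ≤ r / 2 →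
      (∫ x in Ω \ ball ξ₀ r, bubble N ν η x ^ (pexp N + 1) ≤ C * ν ^ (N : ℝ)) ∧
      (∫ x in Ω \ ball ξ₀ r, bubble N μ ξ x ^ pexp N * bubble N ν η x
        ≤ C * μ ^ (((N : ℝ) + 4) / 2) * ν ^ (((N : ℝ) - 4) / 2)) :=
  statement7_general N hN Ω hΩb ξ₀ r hr
end

section
/- Let k ≥ 1 be an integer and let λ, g be real numbers with g ≠ 0. Let T be the k × k real matrix with entries T₁₁ = 3λ, T_ii = 2λ for 2 ≤ i ≤ k, T_{i,i+1} = -g and T_{i+1,i} = -λ²/g for 1 ≤ i ≤ k-1, and all other entries 0. Then det T = (2k+1) λ^k. -/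
noncomputable def Tmat (lam g : ℝ) (n : ℕ) : Matrix (Fin n) (Fin n) ℝ :=
  Matrix.of fun i j : Fin n =>
    if i = j then (if (i : ℕ) = 0 then 3 * lam else 2 * lam)
    else if (j : ℕ) = (i : ℕ) + 1 then -g
    else if (i : ℕ) = (j : ℕ) + 1 then -lam ^ 2 / g
    else 0

lemma Tmat_apply (lam g : ℝ) (n : ℕ) (i j : Fin n) :
    Tmat lam g n i j =
      if (i : ℕ) = (j : ℕ) then (if (i : ℕ) = 0 then 3 * lam else 2 * lam)
      else if (j : ℕ) = (i : ℕ) + 1 then -g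
      else if (i : ℕ) = (j : ℕ) + 1 then -lam ^ 2 / g
      else 0 := by
  simp [Tmat, Fin.ext_iff]

lemma val_succAbove {n : ℕ} (p : Fin (n + 1)) (i : Fin n) :
    ((p.succAbove i : Fin (n + 1)) : ℕ) = if (i : ℕ) < (p : ℕ) then (i : ℕ) else (i : ℕ) + 1 := by
  rw [Fin.succAbove]
  split_ifs with h1 h2 h2
  · rfl
  · exact absurd (by simpa [Fin.lt_def] using h1) h2
  · exact absurd (by simpa [Fin.lt_def] using h2) h1
  · rfl

lemma Tmat_sub {n m : ℕ} (lam g : ℝ) (r : Fin n → Fin m) (c : Fin n → Fin m)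
    (hr : ∀ i, ((r i : Fin m) : ℕ) = (i : ℕ)) (hc : ∀ j, ((c j : Fin m) : ℕ) = (j : ℕ)) :
    (Tmat lam g m).submatrix r c = Tmat lam g n := by
  ext i j
  rw [Matrix.submatrix_apply, Tmat_apply, Tmat_apply, hr, hc]

lemma Tmat_recur (lam g : ℝ) (hg : g ≠ 0) (n : ℕ) :
    (Tmat lam g (n + 2)).det =
      2 * lam * (Tmat lam g (n + 1)).det - lam ^ 2 * (Tmat lam g n).det := by
  set A := Tmat lam g (n + 2) with hA
  have hr : ∀ i : Fin (n + 1), (((Fin.last (n + 1)).succAbove i : Fin (n + 2)) : ℕ) = (i : ℕ) := by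
    intro i
    rw [val_succAbove]
    simp [i.isLt]
  rw [Matrix.det_succ_row A (Fin.last (n + 1))]
  rw [← Finset.sum_erase_add _ _ (Finset.mem_univ (Fin.last (n + 1)))]
  rw [Finset.sum_eq_single_of_mem (⟨n, by omega⟩ : Fin (n + 2))
      (Finset.mem_erase.2 ⟨by simp [Fin.ext_iff], Finset.mem_univ _⟩)]
  · have e1 : A (Fin.last (n + 1)) (Fin.last (n + 1)) = 2 * lam := by
      rw [hA, Tmat_apply]
      simp
    have e2 : A (Fin.last (n + 1)) (⟨n, by omega⟩ : Fin (n + 2)) = -lam ^ 2 / g := by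
      rw [hA, Tmat_apply]
      simp only [Fin.val_last]
      split_ifs with h1 h2 h3 <;> first | rfl | (exfalso; omega)
    have e3 : A.submatrix (Fin.last (n + 1)).succAbove (Fin.last (n + 1)).succAbove
        = Tmat lam g (n + 1) := Tmat_sub lam g _ _ hr hr
    have e4 : (A.submatrix (Fin.last (n + 1)).succAbove
        ((⟨n, by omega⟩ : Fin (n + 2))).succAbove).det = -g * (Tmat lam g n).det := by
      set B := A.submatrix (Fin.last (n + 1)).succAbove
        ((⟨n, by omega⟩ : Fin (n + 2))).succAbove with hB
      rw [Matrix.det_succ_column B (Fin.last n)]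
      rw [Finset.sum_eq_single_of_mem (Fin.last n) (Finset.mem_univ _)]
      · have eB : B (Fin.last n) (Fin.last n) = -g := by
          rw [hB, Matrix.submatrix_apply, hA, Tmat_apply, hr, val_succAbove]
          simp only [Fin.val_last, lt_self_iff_false, if_false]
          split_ifs with h1 h2 <;> first | rfl | (exfalso; omega)
        have eS : B.submatrix (Fin.last n).succAbove (Fin.last n).succAbove = Tmat lam g n := by
          rw [hB, Matrix.submatrix_submatrix]
          apply Tmat_sub
          · intro i
            simp only [Function.comp_apply]
            rw [hr, val_succAbove]
            simp [i.isLt]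
          · intro j
            simp only [Function.comp_apply]
            rw [val_succAbove, val_succAbove]
            simp only [Fin.val_last]
            have := j.isLt
            split_ifs <;> omega
        have sgn : (-1 : ℝ) ^ ((Fin.last n : ℕ) + (Fin.last n : ℕ)) = 1 :=
          Even.neg_one_pow ⟨n, by simp [Fin.val_last]⟩
        rw [eB, eS, sgn]
        ring
      · intro i _ hi
        have hi2 : (i : ℕ) ≠ n := by simpa [Fin.ext_iff] using hi
        have : B i (Fin.last n) = 0 := by
          rw [hB, Matrix.submatrix_apply, hA, Tmat_apply, hr, val_succAbove]
          simp only [Fin.val_last, lt_self_iff_false, if_false]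
          have := i.isLt
          split_ifs with h1 h2 h3 <;> first | (exfalso; omega) | rfl
        simp [this]
    rw [e1, e2, e3, e4]
    simp only [Fin.val_last]
    have s1 : (-1 : ℝ) ^ (n + 1 + n) = -1 := Odd.neg_one_pow ⟨n, by ring⟩
    have s2 : (-1 : ℝ) ^ (n + 1 + (n + 1)) = 1 := Even.neg_one_pow ⟨n + 1, by ring⟩
    rw [s1, s2]
    field_simp
    ring
  · intro b hbm hb
    have hb2 : (b : ℕ) ≠ n := by simpa [Fin.ext_iff] using hb
    have hb3 : (b : ℕ) ≠ n + 1 := by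
      have := (Finset.mem_erase.1 hbm).1
      simpa [Fin.ext_iff] using this
    have : A (Fin.last (n + 1)) b = 0 := by
      rw [hA, Tmat_apply]
      simp only [Fin.val_last]
      split_ifs with h1 h2 h3 <;> first | rfl | (exfalso; omega)
    simp [this]

lemma Tmat_det (lam g : ℝ) (hg : g ≠ 0) : ∀ n : ℕ,
    (Tmat lam g n).det = (2 * (n : ℝ) + 1) * lam ^ n := by
  intro n
  induction n using Nat.strong_induction_on with
  | _ n ih =>
    match n with
    | 0 => simp
    | 1 =>
      rw [Matrix.det_fin_one, Tmat_apply]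
      norm_num
    | (n + 2) =>
      rw [Tmat_recur lam g hg n, ih (n + 1) (by omega), ih n (by omega)]
      push_cast
      ring

/-- The determinant of the tridiagonal `k × k` matrix with diagonal `(3λ, 2λ, …, 2λ)`,
superdiagonal entries `-g` and subdiagonal entries `-λ²/g` equals `(2k+1)λ^k`. -/
theorem statement10 (k : ℕ) (hk : 1 ≤ k) (lam g : ℝ) (hg : g ≠ 0) :
    (Matrix.of fun i j : Fin k =>
      if i = j then (if (i : ℕ) = 0 then 3 * lam else 2 * lam)
      else if (j : ℕ) = (i : ℕ) + 1 then -g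
      else if (i : ℕ) = (j : ℕ) + 1 then -lam ^ 2 / g
      else 0).det = (2 * (k : ℝ) + 1) * lam ^ k :=
  Tmat_det lam g hg k
end

section
/- Let N ≥ 5 and k ≥ 2 be integers and let λ, g be real numbers with g ≠ 0. Let Q be the k × k real matrix with entries Q₁₁ = 3λ, Q_ii = 2λ for 2 ≤ i ≤ k-1, Q_kk = (3N-8)λ/(N-4), Q_{i,i+1} = -g and Q_{i+1,i} = -λ²/g for 1 ≤ i ≤ k-1, and all other entries 0. Then det Q = ((4Nk - 8k - 4)/(N-4)) λ^k; in particular det Q ≠ 0 whenever λ ≠ 0. -/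
/-!
Expanding a tridiagonal determinant along its last row gives the continuant recurrence
`D (n + 2) = d (n + 1) * D (n + 1) - b * c * D n`. For `Q` the off-diagonal product is
`b * c = λ²`, so the leading minors with diagonal `(3λ, 2λ, …, 2λ)` are `(2n + 1) λⁿ`; one more
step of the recurrence, with last diagonal entry `(3N - 8)λ / (N - 4)`, gives the determinant.
Its coefficient `(4k(N - 2) - 4) / (N - 4)` is positive for `N ≥ 5`, `k ≥ 2`.
-/

namespace Matrix

variable {R : Type*}

def tridiagonal [Zero R] (d : ℕ → R) (b c : R) (n : ℕ) : Matrix (Fin n) (Fin n) R :=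
  of fun i j =>
    if i = j then d i else if (j : ℕ) = i + 1 then b else if (i : ℕ) = j + 1 then c else 0

theorem tridiagonal_apply [Zero R] (d : ℕ → R) (b c : R) {n : ℕ} (i j : Fin n) :
    tridiagonal d b c n i j =
      if (i : ℕ) = j then d i
      else if (j : ℕ) = i + 1 then b else if (i : ℕ) = j + 1 then c else 0 := by
  simp [tridiagonal, Fin.ext_iff]

theorem tridiagonal_apply_eq_zero [Zero R] (d : ℕ → R) (b c : R) {n : ℕ} {i j : Fin n}
    (h : (i : ℕ) + 1 < j ∨ (j : ℕ) + 1 < i) : tridiagonal d b c n i j = 0 := by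
  rw [tridiagonal_apply, if_neg, if_neg, if_neg] <;> omega

theorem tridiagonal_submatrix [Zero R] (d : ℕ → R) (b c : R) {m n : ℕ} {f g : Fin m → Fin n}
    (hf : ∀ i, (f i : ℕ) = i) (hg : ∀ i, (g i : ℕ) = i) :
    (tridiagonal d b c n).submatrix f g = tridiagonal d b c m := by
  ext i j
  simp [tridiagonal_apply, hf, hg]

theorem tridiagonal_congr [Zero R] {d d' : ℕ → R} (b c : R) {n : ℕ}
    (h : ∀ i < n, d i = d' i) :
    tridiagonal d b c n = tridiagonal d' b c n := by
  ext i j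
  simp [tridiagonal, h i i.isLt]

theorem det_tridiagonal_succ_succ [CommRing R] (d : ℕ → R) (b c : R) (n : ℕ) :
    (tridiagonal d b c (n + 2)).det =
      d (n + 1) * (tridiagonal d b c (n + 1)).det - b * c * (tridiagonal d b c n).det := by
  set A := tridiagonal d b c (n + 2)
  have hcol : ∀ i : Fin n, A i.castSucc.castSucc (Fin.last (n + 1)) = 0 := fun i =>
    tridiagonal_apply_eq_zero _ _ _ (Or.inl (by simp))
  have hrow : ∀ i : Fin n, A (Fin.last (n + 1)) i.castSucc.castSucc = 0 := fun i =>
    tridiagonal_apply_eq_zero _ _ _ (Or.inr (by simp))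
  have hlast : (A.submatrix (Fin.last (n + 1)).succAbove (Fin.last (n + 1)).succAbove).det
      = (tridiagonal d b c (n + 1)).det := by
    rw [tridiagonal_submatrix] <;> simp
  -- After deleting column `n`, the only nonzero entry of the last column is `b`.
  have hprev : (A.submatrix (Fin.last (n + 1)).succAbove
      (Fin.castSucc (Fin.last n)).succAbove).det = b * (tridiagonal d b c n).det := by
    rw [det_succ_column _ (Fin.last n), Fin.sum_univ_castSucc]
    simp only [submatrix_apply, submatrix_submatrix, Fin.succAbove_last,
      Fin.succAbove_castSucc_self, Fin.succ_last, hcol, mul_zero, zero_mul, Finset.sum_const_zero,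
      zero_add]
    rw [tridiagonal_submatrix]
    · simp [A, tridiagonal_apply]
    · simp
    · intro i
      simp [Fin.succAbove_castSucc_of_lt _ _ (Fin.castSucc_lt_last i)]
  rw [det_succ_row A (Fin.last (n + 1)), Fin.sum_univ_castSucc, Fin.sum_univ_castSucc, hlast,
    hprev]
  have hdiag : A (Fin.last (n + 1)) (Fin.last (n + 1)) = d (n + 1) := by
    simp [A, tridiagonal_apply]
  have hsub : A (Fin.last (n + 1)) (Fin.last n).castSucc = c := by
    simp [A, tridiagonal_apply, show n ≠ n + 1 + 1 by omega]
  have hodd : (-1 : R) ^ (n + 1 + n) = -1 := Odd.neg_one_pow ⟨n, by ring⟩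
  have heven : (-1 : R) ^ (n + 1 + (n + 1)) = 1 := Even.neg_one_pow ⟨n + 1, rfl⟩
  simp only [hrow, hdiag, hsub, Fin.val_last, Fin.val_castSucc, hodd, heven, mul_zero, zero_mul,
    Finset.sum_const_zero, zero_add]
  ring

theorem det_tridiagonal_three_two [CommRing R] {b c l : R} (hbc : b * c = l ^ 2) :
    ∀ n : ℕ,
      (tridiagonal (fun i => if i = 0 then 3 * l else 2 * l) b c n).det = (2 * n + 1) * l ^ n
  | 0 => by simp
  | 1 => by simp [tridiagonal_apply]; ring
  | n + 2 => by
    rw [det_tridiagonal_succ_succ, det_tridiagonal_three_two hbc (n + 1),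
      det_tridiagonal_three_two hbc n, hbc]
    push_cast
    ring

theorem det_tridiagonal_three_two_of_last [CommRing R] {b c l : R} (hbc : b * c = l ^ 2) (a : R)
    (n : ℕ) :
    (tridiagonal (fun i => if i = 0 then 3 * l else if i = n + 1 then a else 2 * l) b c (n + 2)).det
      = (2 * n + 3) * a * l ^ (n + 1) - (2 * n + 1) * l ^ (n + 2) := by
  have hlead : ∀ m ≤ n + 1,
      tridiagonal (fun i => if i = 0 then 3 * l else if i = n + 1 then a else 2 * l) b c m
        = tridiagonal (fun i => if i = 0 then 3 * l else 2 * l) b c m := fun m hm =>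
    tridiagonal_congr b c fun i hi => by simp only [show i ≠ n + 1 by omega, if_false]
  rw [det_tridiagonal_succ_succ, hlead (n + 1) le_rfl, hlead n (by omega),
    det_tridiagonal_three_two hbc, det_tridiagonal_three_two hbc, hbc]
  simp only [show n + 1 ≠ 0 by omega, if_true, if_false]
  push_cast
  ring

end Matrix

open Matrix

/-- The determinant of the tridiagonal `k × k` matrix `Q` with diagonal
`(3λ, 2λ, …, 2λ, (3N-8)λ/(N-4))`, superdiagonal entries `-g` and subdiagonal entries
`-λ²/g` equals `((4Nk - 8k - 4)/(N-4)) λ^k`; in particular `det Q ≠ 0` whenever `λ ≠ 0`. -/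
theorem statement11 (N k : ℕ) (hN : 5 ≤ N) (hk : 2 ≤ k) (lam g : ℝ) (hg : g ≠ 0) :
    (Matrix.of fun i j : Fin k =>
      if i = j then
        (if (i : ℕ) = 0 then 3 * lam
         else if (i : ℕ) = k - 1 then (3 * (N : ℝ) - 8) * lam / ((N : ℝ) - 4)
         else 2 * lam)
      else if (j : ℕ) = (i : ℕ) + 1 then -g
      else if (i : ℕ) = (j : ℕ) + 1 then -lam ^ 2 / g
      else 0).det
      = (4 * (N : ℝ) * (k : ℝ) - 8 * (k : ℝ) - 4) / ((N : ℝ) - 4) * lam ^ k ∧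
    (lam ≠ 0 →
      (Matrix.of fun i j : Fin k =>
        if i = j then
          (if (i : ℕ) = 0 then 3 * lam
           else if (i : ℕ) = k - 1 then (3 * (N : ℝ) - 8) * lam / ((N : ℝ) - 4)
           else 2 * lam)
        else if (j : ℕ) = (i : ℕ) + 1 then -g
        else if (i : ℕ) = (j : ℕ) + 1 then -lam ^ 2 / g
        else 0).det ≠ 0) := by
  obtain ⟨m, rfl⟩ : ∃ m, k = m + 2 := ⟨k - 2, by omega⟩
  have hN' : (5 : ℝ) ≤ N := by exact_mod_cast hN
  have hbc : -g * (-lam ^ 2 / g) = lam ^ 2 := by field_simp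
  have hdet : (2 * m + 3) * ((3 * (N : ℝ) - 8) * lam / ((N : ℝ) - 4)) * lam ^ (m + 1)
      - (2 * m + 1) * lam ^ (m + 2)
      = (4 * (N : ℝ) * ((m + 2 : ℕ) : ℝ) - 8 * ((m + 2 : ℕ) : ℝ) - 4) / ((N : ℝ) - 4)
        * lam ^ (m + 2) := by
    have : (N : ℝ) - 4 ≠ 0 := by linarith
    push_cast
    field_simp
    ring
  -- `Q` is `tridiagonal _ (-g) (-lam ^ 2 / g) (m + 2)` up to the defeq `m + 2 - 1 = m + 1`.
  have hQ := (det_tridiagonal_three_two_of_last hbc _ m).trans hdet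
  refine ⟨hQ, fun hlam => hQ.trans_ne ?_⟩
  have hnum : 0 < 4 * (N : ℝ) * ((m + 2 : ℕ) : ℝ) - 8 * ((m + 2 : ℕ) : ℝ) - 4 := by
    push_cast
    nlinarith
  exact mul_ne_zero (div_pos hnum (by linarith)).ne' (pow_ne_zero _ hlam)
end
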